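/- Let Y ∈ St(n,k) have Y_{ii}=1, other entries 0, and let Ξ ∈ ℝ^{n×k} be rectangular-diagonal with diagonal entries λ₁,…,λ_k. Define II_Y(A,B) = −½ Y(AᵀB + BᵀA). For the basis vectors 𝒜_{ij} = (E_{ij} − E_{ji})/√2 (1 ≤ i < j ≤ k) and E_{ij} (k < i ≤ n, 1 ≤ j ≤ k) of T_Y St(n,k), one has ⟨II_Y(𝒜_{ij}, 𝒜_{ij}), Ξ⟩ = −½(λ_i + λ_j) and ⟨II_Y(E_{ij}, E_{ij}), Ξ⟩ = −λ_j, while ⟨II_Y(A,B), Ξ⟩ = 0 for any two distinct basis vectors A ≠ B. -/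

import Mathlib

/-!
Write `Ξ = Y · diag λ`. Since `Yᵀ Y = I` and `AᵀB + BᵀA` is symmetric, cyclicity of the trace gives
`⟨II_Y(A, B), Ξ⟩ = -Tr (Aᵀ B diag λ) = -∑ᵢⱼ Aᵢⱼ Bᵢⱼ λⱼ`, a weighted Frobenius pairing. Distinct basis
vectors are supported on disjoint sets of entries, so they pair to zero; `𝒜ᵢⱼ` has entries `±1/√2`
at `(i, j)` and `(j, i)`, giving `(λᵢ + λⱼ)/2`, and `Eᵢⱼ` gives `λⱼ`.
-/

open Matrix

/-- Index type for the tangent basis at `Y`: pairs `i < j ≤ k` (the `𝔰𝔬(k)` part)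
and pairs `(i,j)` with `k ≤ i < n` (the Grassmannian part). -/
def tangentIndex (n k : ℕ) :=
  ({p : Fin k × Fin k // p.1 < p.2}) ⊕ ({q : Fin n × Fin k // k ≤ (q.1 : ℕ)})

/-- The tangent basis at `Y`: `𝒜_{ij} = (E_{ij} − E_{ji})/√2` and the `E_{ij}`. -/
noncomputable def tangentBasis {n k : ℕ} (hk : k ≤ n) :
    tangentIndex n k → Matrix (Fin n) (Fin k) ℝ
  | Sum.inl p => (Real.sqrt 2)⁻¹ •
      (Matrix.single (Fin.castLE hk p.1.1) p.1.2 (1 : ℝ) -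
        Matrix.single (Fin.castLE hk p.1.2) p.1.1 (1 : ℝ))
  | Sum.inr q => Matrix.single q.1.1 q.1.2 (1 : ℝ)

/-- The point `Y ∈ St(n,k)`. -/
def stiefelY (n k : ℕ) : Matrix (Fin n) (Fin k) ℝ :=
  Matrix.of fun i j => if (i : ℕ) = (j : ℕ) then 1 else 0

theorem trace_transpose_mul_mul_diagonal_comm {m k R : Type*} [Fintype m] [Fintype k]
    [DecidableEq k] [CommSemiring R] (A B : Matrix m k R) (l : k → R) :
    trace (Bᵀ * A * diagonal l) = trace (Aᵀ * B * diagonal l) := by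
  rw [← trace_transpose, transpose_mul, transpose_mul, transpose_transpose, diagonal_transpose,
    trace_mul_comm, Matrix.mul_assoc]

theorem trace_secondFundamentalForm_mul {m k R : Type*} [Fintype m] [Fintype k]
    [DecidableEq k] [Field R] [CharZero R] {Y : Matrix m k R} (hY : Yᵀ * Y = 1)
    (A B : Matrix m k R) (l : k → R) :
    trace ((-(1 / 2 : R) • (Y * (Aᵀ * B + Bᵀ * A)))ᵀ * (Y * diagonal l)) =
      -trace (Aᵀ * B * diagonal l) := by
  have hsymm : (Aᵀ * B + Bᵀ * A)ᵀ = Aᵀ * B + Bᵀ * A := by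
    rw [transpose_add, transpose_mul, transpose_mul, transpose_transpose, transpose_transpose,
      add_comm]
  rw [transpose_smul, transpose_mul, hsymm, Matrix.smul_mul, Matrix.mul_assoc,
    ← Matrix.mul_assoc Yᵀ, hY, Matrix.one_mul, Matrix.add_mul, trace_smul,
    trace_add, trace_transpose_mul_mul_diagonal_comm, smul_eq_mul]
  ring

theorem trace_single_transpose_mul_single_mul_diagonal {m k R : Type*} [Fintype m] [Fintype k]
    [DecidableEq m] [DecidableEq k] [CommSemiring R] (i i' : m) (j j' : k) (l : k → R) :
    trace ((single i j (1 : R))ᵀ * single i' j' (1 : R) * diagonal l) =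
      if i = i' ∧ j = j' then l j else 0 := by
  rw [transpose_single, Matrix.mul_assoc, trace_single_mul]
  simp only [mul_diagonal, single_apply, one_smul, eq_comm (a := i'), eq_comm (a := j')]
  split_ifs with h <;> simp_all

theorem rectDiagonal_eq_stiefelY_mul_diagonal {n k : ℕ} (l : Fin k → ℝ) :
    (of fun (i : Fin n) (j : Fin k) => if (i : ℕ) = (j : ℕ) then l j else 0) =
      stiefelY n k * diagonal l := by
  ext i j
  simp [stiefelY, mul_diagonal]

theorem stiefelY_transpose_mul_self {n k : ℕ} (hk : k ≤ n) :
    (stiefelY n k)ᵀ * stiefelY n k = 1 := by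
  ext i j
  rw [mul_apply, Finset.sum_eq_single (Fin.castLE hk i)]
  · simp [stiefelY, one_apply, Fin.ext_iff]
  · intro r _ hr
    have : (r : ℕ) ≠ i := fun h => hr (Fin.ext h)
    simp [stiefelY, this]
  · simp

theorem trace_tangentBasis_transpose_mul_mul_diagonal_of_ne {n k : ℕ} (hk : k ≤ n)
    (l : Fin k → ℝ) {a b : tangentIndex n k} (hab : a ≠ b) :
    trace ((tangentBasis hk a)ᵀ * tangentBasis hk b * diagonal l) = 0 := by
  -- `Sum.inl.injEq` and friends do not see through the definition `tangentIndex`.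
  unfold tangentIndex at hab
  rcases a with ⟨⟨i, j⟩, hij : (i : ℕ) < j⟩ | ⟨⟨i, j⟩, hi : k ≤ (i : ℕ)⟩ <;>
    rcases b with ⟨⟨i', j'⟩, hij' : (i' : ℕ) < j'⟩ | ⟨⟨i', j'⟩, hi' : k ≤ (i' : ℕ)⟩ <;>
    simp only [tangentBasis, transpose_smul, transpose_sub, Matrix.smul_mul, Matrix.mul_smul,
      Matrix.sub_mul, Matrix.mul_sub, trace_smul, trace_sub,
      trace_single_transpose_mul_single_mul_diagonal, smul_eq_mul, Fin.ext_iff, Fin.val_castLE] <;>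
    simp only [ne_eq, Sum.inl.injEq, Sum.inr.injEq, Subtype.mk.injEq, Prod.mk.injEq,
      Fin.ext_iff, reduceCtorEq] at * <;>
    split_ifs <;> first | omega | ring

theorem trace_tangentBasis_inl_transpose_mul_self_mul_diagonal {n k : ℕ} (hk : k ≤ n)
    (l : Fin k → ℝ) (p : {p : Fin k × Fin k // p.1 < p.2}) :
    trace ((tangentBasis hk (Sum.inl p))ᵀ * tangentBasis hk (Sum.inl p) * diagonal l) =
      (l p.1.1 + l p.1.2) / 2 := by
  have hne : Fin.castLE hk p.1.1 ≠ Fin.castLE hk p.1.2 := by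
    simpa [Fin.castLE_inj] using p.2.ne
  have hsqrt : (Real.sqrt 2)⁻¹ * (Real.sqrt 2)⁻¹ = (1 / 2 : ℝ) := by
    rw [← mul_inv, Real.mul_self_sqrt zero_le_two, one_div]
  simp only [tangentBasis, transpose_smul, transpose_sub, Matrix.smul_mul, Matrix.mul_smul,
    Matrix.sub_mul, Matrix.mul_sub, trace_smul, trace_sub,
    trace_single_transpose_mul_single_mul_diagonal, smul_eq_mul, hne, hne.symm,
    false_and, and_self, if_true, if_false]
  linear_combination (l p.1.1 + l p.1.2) * hsqrt

theorem trace_tangentBasis_inr_transpose_mul_self_mul_diagonal {n k : ℕ} (hk : k ≤ n)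
    (l : Fin k → ℝ) (q : {q : Fin n × Fin k // k ≤ (q.1 : ℕ)}) :
    trace ((tangentBasis hk (Sum.inr q))ᵀ * tangentBasis hk (Sum.inr q) * diagonal l) =
      l q.1.2 := by
  simp only [tangentBasis, trace_single_transpose_mul_single_mul_diagonal, and_self, if_true]

/-- The second fundamental form at `Y` paired with a rectangular-diagonal `Ξ` is diagonal
in the standard tangent basis, with the stated diagonal values. -/
theorem stiefel_II_eigenvalues (n k : ℕ) (hk : k ≤ n) (l : Fin k → ℝ) :
    (∀ p : {p : Fin k × Fin k // p.1 < p.2},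
      Matrix.trace ((-(1 / 2 : ℝ) • (stiefelY n k *
          ((tangentBasis hk (Sum.inl p))ᵀ * tangentBasis hk (Sum.inl p) +
            (tangentBasis hk (Sum.inl p))ᵀ * tangentBasis hk (Sum.inl p))))ᵀ *
        Matrix.of fun (i : Fin n) (j : Fin k) => if (i : ℕ) = (j : ℕ) then l j else 0) =
        -(1 / 2) * (l p.1.1 + l p.1.2)) ∧
    (∀ q : {q : Fin n × Fin k // k ≤ (q.1 : ℕ)},
      Matrix.trace ((-(1 / 2 : ℝ) • (stiefelY n k *
          ((tangentBasis hk (Sum.inr q))ᵀ * tangentBasis hk (Sum.inr q) +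
            (tangentBasis hk (Sum.inr q))ᵀ * tangentBasis hk (Sum.inr q))))ᵀ *
        Matrix.of fun (i : Fin n) (j : Fin k) => if (i : ℕ) = (j : ℕ) then l j else 0) =
        -(l q.1.2)) ∧
    (∀ a b : tangentIndex n k, a ≠ b →
      Matrix.trace ((-(1 / 2 : ℝ) • (stiefelY n k *
          ((tangentBasis hk a)ᵀ * tangentBasis hk b +
            (tangentBasis hk b)ᵀ * tangentBasis hk a)))ᵀ *
        Matrix.of fun (i : Fin n) (j : Fin k) => if (i : ℕ) = (j : ℕ) then l j else 0) = 0) := by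
  simp only [rectDiagonal_eq_stiefelY_mul_diagonal,
    trace_secondFundamentalForm_mul (stiefelY_transpose_mul_self hk)]
  refine ⟨fun p => ?_, fun q => ?_, fun a b hab => ?_⟩
  · rw [trace_tangentBasis_inl_transpose_mul_self_mul_diagonal]
    ring
  · rw [trace_tangentBasis_inr_transpose_mul_self_mul_diagonal]
  · rw [trace_tangentBasis_transpose_mul_mul_diagonal_of_ne hk l hab, neg_zero]
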